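/- arXiv:0801.3306 — 4 statements merged into one kernel-verified Lean document; each statement's English description precedes it below -/
import Mathlib

section
/- On any digraph with a global sink, the chip addition operators commute: for all non-sink vertices v and w and every chip configuration σ, E_w(E_v σ) = E_v(E_w σ). -/
/-!
Extra chips never disable a firing, and firing one active vertex leaves every other active
vertex active while two firings commute. Hence the first vertex fired by one legal sequence
reaching a stable configuration also occurs in any other such sequence and can be moved to its
front, so by induction all legal stabilizing sequences end in the same configuration. Both
`E_w (E_v σ)` and `E_v (E_w σ)` are then stabilizations of `σ + 1_v + 1_w`.
-/

/-- The out-degree of a vertex. -/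
def outdeg {V E : Type} [Fintype E] [DecidableEq V] (tail : E → V) (v : V) : ℕ :=
  (Finset.univ.filter (fun e => tail e = v)).card

/-- The number of edges from `v` to `w`. -/
def numEdges {V E : Type} [Fintype E] [DecidableEq V] (tail head : E → V) (v w : V) : ℕ :=
  (Finset.univ.filter (fun e => tail e = v ∧ head e = w)).card

/-- The vertices other than the (global) sink `s`; on a digraph with global sink these
are exactly the non-sink vertices, and chip configurations are indexed by them. -/
abbrev Vne {V : Type} (s : V) : Type := {v : V // v ≠ s}

/-- Firing the vertex `v`. -/
def fire {V E : Type} [Fintype E] [DecidableEq V] {s : V} (tail head : E → V)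
    (σ : Vne s → ℕ) (v : Vne s) : Vne s → ℕ :=
  fun w =>
    if w = v then σ v + numEdges tail head v.1 v.1 - outdeg tail v.1
    else σ w + numEdges tail head v.1 w.1

/-- A (non-sink) vertex is active when it has at least as many chips as outgoing edges. -/
def Active {V E : Type} [Fintype E] [DecidableEq V] {s : V} (tail : E → V)
    (σ : Vne s → ℕ) (v : Vne s) : Prop :=
  outdeg tail v.1 ≤ σ v

/-- The result of firing the vertices in the list `l` in order, starting from `σ`. -/
def fireList {V E : Type} [Fintype E] [DecidableEq V] {s : V} (tail head : E → V)
    (σ : Vne s → ℕ) : List (Vne s) → (Vne s → ℕ)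
  | [] => σ
  | v :: l => fireList tail head (fire tail head σ v) l

/-- The firing sequence `l` is legal from `σ`. -/
def Legal {V E : Type} [Fintype E] [DecidableEq V] {s : V} (tail head : E → V)
    (σ : Vne s → ℕ) : List (Vne s) → Prop
  | [] => True
  | v :: l => Active tail σ v ∧ Legal tail head (fire tail head σ v) l

/-- A configuration is stable when no non-sink vertex is active. -/
def Stable {V E : Type} [Fintype E] [DecidableEq V] {s : V} (tail : E → V)
    (σ : Vne s → ℕ) : Prop :=
  ∀ v, σ v < outdeg tail v.1

/-- `τ` is the stabilization `σ°` of `σ`: it is stable and obtained from `σ` by a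
legal sequence of firings. -/
def StabilizesTo {V E : Type} [Fintype E] [DecidableEq V] {s : V} (tail head : E → V)
    (σ τ : Vne s → ℕ) : Prop :=
  ∃ l, Legal tail head σ l ∧ fireList tail head σ l = τ ∧ Stable tail τ

/-- Adding a single chip at the vertex `v`. -/
def addChip {V : Type} {s : V} [DecidableEq V] (σ : Vne s → ℕ) (v : Vne s) : Vne s → ℕ :=
  fun w => if w = v then σ w + 1 else σ w

section Stabilization

variable {V E : Type} [Fintype E] [DecidableEq V] {s : V} (tail head : E → V)

lemma fire_of_ne {σ : Vne s → ℕ} {v w : Vne s} (h : w ≠ v) :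
    fire tail head σ v w = σ w + numEdges tail head v.1 w.1 :=
  if_neg h

lemma active_fire_of_ne {σ : Vne s → ℕ} {u v : Vne s} (huv : u ≠ v) (hv : Active tail σ v) :
    Active tail (fire tail head σ u) v :=
  hv.trans ((fire_of_ne tail head huv.symm).symm ▸ Nat.le_add_right _ _)

lemma fire_fire_comm {σ : Vne s → ℕ} {u v : Vne s} (hu : Active tail σ u)
    (hv : Active tail σ v) :
    fire tail head (fire tail head σ u) v = fire tail head (fire tail head σ v) u := by
  rcases eq_or_ne u v with rfl | huv
  · rfl
  funext x
  unfold Active at hu hv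
  simp only [fire]
  split_ifs <;> simp_all <;> omega

lemma legal_append (σ : Vne s → ℕ) (l₁ l₂ : List (Vne s)) :
    Legal tail head σ (l₁ ++ l₂) ↔
      Legal tail head σ l₁ ∧ Legal tail head (fireList tail head σ l₁) l₂ := by
  induction l₁ generalizing σ with
  | nil => simp [Legal, fireList]
  | cons v l ih => exact (and_congr_right' (ih _)).trans and_assoc.symm

lemma fireList_append (σ : Vne s → ℕ) (l₁ l₂ : List (Vne s)) :
    fireList tail head σ (l₁ ++ l₂) = fireList tail head (fireList tail head σ l₁) l₂ := by
  induction l₁ generalizing σ with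
  | nil => rfl
  | cons v l ih => exact ih _

lemma le_fireList_of_not_mem (σ : Vne s → ℕ) {l : List (Vne s)} {v : Vne s} (hv : v ∉ l) :
    σ v ≤ fireList tail head σ l v := by
  induction l generalizing σ with
  | nil => exact le_rfl
  | cons u l ih =>
    rw [List.mem_cons, not_or] at hv
    exact (fire_of_ne tail head hv.1 ▸ Nat.le_add_right _ _).trans (ih _ hv.2)

lemma mem_of_active_of_stable {σ : Vne s → ℕ} {l : List (Vne s)} {v : Vne s}
    (hv : Active tail σ v) (hst : Stable tail (fireList tail head σ l)) : v ∈ l := by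
  by_contra h
  exact (hst v).not_ge (hv.trans (le_fireList_of_not_mem tail head σ h))

lemma exists_legal_cons_of_active_of_mem {σ : Vne s → ℕ} {v : Vne s} {l : List (Vne s)}
    (hv : Active tail σ v) (hmem : v ∈ l) (hl : Legal tail head σ l) :
    ∃ l', Legal tail head σ (v :: l') ∧ fireList tail head σ l = fireList tail head σ (v :: l') := by
  induction l generalizing σ with
  | nil => cases hmem
  | cons u l ih =>
    obtain ⟨hu, hl⟩ := hl
    by_cases huv : u = v
    · subst huv
      exact ⟨l, ⟨hu, hl⟩, rfl⟩
    obtain ⟨l', ⟨-, hl'⟩, hfire⟩ :=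
      ih (active_fire_of_ne tail head huv hv) (List.mem_of_ne_of_mem (Ne.symm huv) hmem) hl
    have hcomm := fire_fire_comm tail head hu hv
    refine ⟨u :: l', ⟨hv, active_fire_of_ne tail head (Ne.symm huv) hu, hcomm ▸ hl'⟩, ?_⟩
    exact hfire.trans (congrArg (fireList tail head · l') hcomm)

lemma fireList_eq_of_legal_of_stable {σ : Vne s → ℕ} {l₁ l₂ : List (Vne s)}
    (hl₁ : Legal tail head σ l₁) (hl₂ : Legal tail head σ l₂)
    (hst₁ : Stable tail (fireList tail head σ l₁)) (hst₂ : Stable tail (fireList tail head σ l₂)) :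
    fireList tail head σ l₁ = fireList tail head σ l₂ := by
  induction l₁ generalizing σ l₂ with
  | nil =>
    cases l₂ with
    | nil => rfl
    | cons u _ => exact absurd hl₂.1 (hst₁ u).not_ge
  | cons v l₁ ih =>
    obtain ⟨hv, hl₁⟩ := hl₁
    obtain ⟨l', ⟨-, hl'⟩, hfire⟩ := exists_legal_cons_of_active_of_mem tail head hv
      (mem_of_active_of_stable tail head hv hst₂) hl₂
    rw [hfire] at hst₂ ⊢
    exact ih hl₁ hl' hst₁ hst₂

lemma StabilizesTo.unique {σ τ τ' : Vne s → ℕ} (h : StabilizesTo tail head σ τ)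
    (h' : StabilizesTo tail head σ τ') : τ = τ' := by
  obtain ⟨l, hl, rfl, hst⟩ := h
  obtain ⟨l', hl', rfl, hst'⟩ := h'
  exact fireList_eq_of_legal_of_stable tail head hl hl' hst hst'

lemma legal_addChip {σ : Vne s → ℕ} {l : List (Vne s)} (w : Vne s) (hl : Legal tail head σ l) :
    Legal tail head (addChip σ w) l ∧
      fireList tail head (addChip σ w) l = addChip (fireList tail head σ l) w := by
  induction l generalizing σ with
  | nil => exact ⟨trivial, rfl⟩
  | cons u l ih =>
    obtain ⟨hu, hl⟩ := hl
    have hfire : fire tail head (addChip σ w) u = addChip (fire tail head σ u) w := by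
      funext x
      unfold Active at hu
      simp only [fire, addChip]
      split_ifs <;> simp_all <;> omega
    obtain ⟨hlegal, hfireList⟩ := ih hl
    refine ⟨⟨?_, hfire ▸ hlegal⟩, ?_⟩
    · unfold Active addChip at *
      split <;> omega
    · exact (congrArg (fireList tail head · l) hfire).trans hfireList

lemma StabilizesTo.addChip_addChip {σ σ₁ τ : Vne s → ℕ} {v w : Vne s}
    (h₁ : StabilizesTo tail head (addChip σ v) σ₁) (h₂ : StabilizesTo tail head (addChip σ₁ w) τ) :
    StabilizesTo tail head (addChip (addChip σ v) w) τ := by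
  obtain ⟨l₁, hl₁, rfl, -⟩ := h₁
  obtain ⟨l₂, hl₂, rfl, hst⟩ := h₂
  obtain ⟨hlegal, hfireList⟩ := legal_addChip tail head w hl₁
  refine ⟨l₁ ++ l₂, ?_, ?_, hst⟩
  · exact (legal_append tail head _ _ _).2 ⟨hlegal, hfireList ▸ hl₂⟩
  · rw [fireList_append, hfireList]

lemma addChip_comm (σ : Vne s → ℕ) (v w : Vne s) :
    addChip (addChip σ v) w = addChip (addChip σ w) v := by
  funext x
  unfold addChip
  split_ifs <;> rfl

end Stabilization

theorem chip_addition_operators_commute_general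
    {V E : Type} [DecidableEq V] [Fintype E]
    (tail head : E → V)
    (s : V)
    (v w : Vne s) (σ σ₁ σ₂ τ₁ τ₂ : Vne s → ℕ)
    (h1 : StabilizesTo tail head (addChip σ v) σ₁)
    (h2 : StabilizesTo tail head (addChip σ₁ w) τ₁)
    (h3 : StabilizesTo tail head (addChip σ w) σ₂)
    (h4 : StabilizesTo tail head (addChip σ₂ v) τ₂) :
    τ₁ = τ₂ := by
  have h13 := StabilizesTo.addChip_addChip tail head h1 h2
  have h24 := StabilizesTo.addChip_addChip tail head h3 h4
  rw [addChip_comm] at h24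
  exact h13.unique tail head h24

/-- **The chip addition operators commute.**  On a digraph with a global sink,
`E_w (E_v σ) = E_v (E_w σ)` for all non-sink vertices `v, w` and every chip
configuration `σ`; here `E_v σ = (σ + 1_v)°`, expressed below via the
stabilization relation. -/
theorem chip_addition_operators_commute
    {V E : Type} [Fintype V] [DecidableEq V] [Fintype E]
    (tail head : E → V)
    (s : V) (hs : outdeg tail s = 0)
    (hglobal : ∀ v : V,
      Relation.ReflTransGen (fun a b => ∃ e, tail e = a ∧ head e = b) v s)
    (v w : Vne s) (σ σ₁ σ₂ τ₁ τ₂ : Vne s → ℕ)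
    (h1 : StabilizesTo tail head (addChip σ v) σ₁)
    (h2 : StabilizesTo tail head (addChip σ₁ w) τ₁)
    (h3 : StabilizesTo tail head (addChip σ w) σ₂)
    (h4 : StabilizesTo tail head (addChip σ₂ v) τ₂) :
    τ₁ = τ₂ :=
  chip_addition_operators_commute_general tail head s v w σ σ₁ σ₂ τ₁ τ₂ h1 h2 h3 h4
end

section
/- Let G be a digraph on n vertices with a global sink. Every equivalence class of ℤ^{n−1} modulo the integer row span of the reduced Laplacian Δ'(G) contains exactly one recurrent chip configuration of G. -/
/-- `σ` is accessible: from any chip configuration `ζ` one can obtain `σ` by adding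
some chips and then performing a legal sequence of firings of active vertices. -/
def Accessible {V E : Type} [Fintype E] [DecidableEq V] {s : V} (tail head : E → V)
    (σ : Vne s → ℕ) : Prop :=
  ∀ ζ : Vne s → ℕ, ∃ (β : Vne s → ℕ) (l : List (Vne s)),
    Legal tail head (fun v => ζ v + β v) l ∧ fireList tail head (fun v => ζ v + β v) l = σ

/-- A chip configuration is recurrent when it is both stable and accessible. -/
def Recurrent {V E : Type} [Fintype E] [DecidableEq V] {s : V} (tail head : E → V)
    (σ : Vne s → ℕ) : Prop :=
  Stable tail σ ∧ Accessible tail head σ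

/-- The reduced Laplacian of the digraph. -/
def reducedLaplacian {V E : Type} [Fintype E] [DecidableEq V] (tail head : E → V)
    (s : V) : Matrix (Vne s) (Vne s) ℤ :=
  fun i j => (if i = j then (outdeg tail i.1 : ℤ) else 0) - (numEdges tail head i.1 j.1 : ℤ)

/-- The integer row span of the reduced Laplacian. -/
def rowSpan {V E : Type} [Fintype E] [DecidableEq V] (tail head : E → V) (s : V) :
    Submodule ℤ (Vne s → ℤ) :=
  Submodule.span ℤ (Set.range (fun i => reducedLaplacian tail head s i))


namespace ChipFiring

open Finset Matrix

def firingVector {α : Type} [DecidableEq α] (l : List α) : α → ℤ := fun a => l.count a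

def SinkReachable {V E : Type} (tail head : E → V) (s : V) : Prop :=
  ∀ v : V, Relation.ReflTransGen (fun a b => ∃ e, tail e = a ∧ head e = b) v s

section FiringVector

variable {α : Type} [DecidableEq α]

@[simp]
theorem firingVector_nil : firingVector ([] : List α) = 0 := rfl

theorem firingVector_cons (a : α) (l : List α) :
    firingVector (a :: l) = firingVector l + Pi.single a 1 := by
  funext b
  by_cases h : a = b
  · subst h; simp [firingVector]
  · simp [firingVector, h, Ne.symm h]

theorem firingVector_nonneg (l : List α) : 0 ≤ firingVector l :=
  fun _ => Nat.cast_nonneg _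

theorem length_eq_sum_firingVector [Fintype α] (l : List α) :
    (l.length : ℤ) = ∑ a, firingVector l a := by
  induction l with
  | nil => simp
  | cons a l ih => simp [firingVector_cons, sum_add_distrib, ih]

end FiringVector

variable {V E : Type} [DecidableEq V] [Fintype E] {tail head : E → V} {s : V}

local notation "Δ'" => reducedLaplacian tail head s

theorem numEdges_pos {e : E} : 0 < numEdges tail head (tail e) (head e) :=
  card_pos.2 ⟨e, by simp⟩

theorem outdeg_le_card (v : V) : outdeg tail v ≤ Fintype.card E :=
  card_filter_le _ _

theorem cast_fire {σ : Vne s → ℕ} {v : Vne s} (hv : Active tail σ v) :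
    Nat.cast ∘ fire tail head σ v = Nat.cast ∘ σ - Δ' v := by
  funext w
  by_cases h : w = v
  · subst h
    simp [fire, reducedLaplacian, Nat.cast_sub (le_add_right hv)]
    ring
  · simp [fire, reducedLaplacian, h, Ne.symm h]

theorem fireList_append (σ : Vne s → ℕ) (l₁ l₂ : List (Vne s)) :
    fireList tail head σ (l₁ ++ l₂) = fireList tail head (fireList tail head σ l₁) l₂ := by
  induction l₁ generalizing σ with
  | nil => rfl
  | cons v l ih => exact ih _

theorem legal_append {σ : Vne s → ℕ} {l₁ l₂ : List (Vne s)} :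
    Legal tail head σ (l₁ ++ l₂) ↔
      Legal tail head σ l₁ ∧ Legal tail head (fireList tail head σ l₁) l₂ := by
  induction l₁ generalizing σ with
  | nil => simp [Legal, fireList]
  | cons v l ih => simp only [List.cons_append, Legal, fireList, ih, and_assoc]

theorem fire_add {σ : Vne s → ℕ} {v : Vne s} (hv : Active tail σ v) (β : Vne s → ℕ) :
    fire tail head (σ + β) v = fire tail head σ v + β := by
  funext w
  by_cases h : w = v
  · subst h
    simp only [fire, Pi.add_apply, if_true]
    have : outdeg tail w.1 ≤ σ w := hv
    omega
  · simp only [fire, Pi.add_apply, if_neg h]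
    ring

theorem legal_add {σ : Vne s → ℕ} {l : List (Vne s)} (hl : Legal tail head σ l)
    (β : Vne s → ℕ) : Legal tail head (σ + β) l := by
  induction l generalizing σ with
  | nil => trivial
  | cons v l ih => exact ⟨le_add_right hl.1, fire_add hl.1 β ▸ ih hl.2⟩

theorem fireList_add {σ : Vne s → ℕ} {l : List (Vne s)} (hl : Legal tail head σ l)
    (β : Vne s → ℕ) : fireList tail head (σ + β) l = fireList tail head σ l + β := by
  induction l generalizing σ with
  | nil => rfl
  | cons v l ih => rw [fireList, fireList, fire_add hl.1, ih hl.2]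

theorem exists_legal_stable_of_length_le {σ : Vne s → ℕ} {N : ℕ}
    (hN : ∀ l, Legal tail head σ l → l.length ≤ N) :
    ∃ l, Legal tail head σ l ∧ Stable tail (fireList tail head σ l) := by
  induction N generalizing σ with
  | zero =>
    refine ⟨[], trivial, fun v => lt_of_not_ge fun hv => ?_⟩
    simpa using hN [v] ⟨hv, trivial⟩
  | succ N ih =>
    by_cases hst : Stable tail σ
    · exact ⟨[], trivial, hst⟩
    obtain ⟨v, hv⟩ : ∃ v, Active tail σ v := by simpa [Stable, Active] using hst
    obtain ⟨l, hl, hstl⟩ := ih (σ := fire tail head σ v) fun l hl => by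
      simpa using hN (v :: l) ⟨hv, hl⟩
    exact ⟨v :: l, ⟨hv, hl⟩, hstl⟩

variable [Fintype V]

theorem vecMul_reducedLaplacian_apply (c : Vne s → ℤ) (u : Vne s) :
    (c ᵥ* Δ') u = c u * outdeg tail u.1 - ∑ v, c v * numEdges tail head v.1 u.1 := by
  simp [vecMul, dotProduct, reducedLaplacian, mul_sub, sum_sub_distrib]

theorem vecMul_reducedLaplacian_le {c : Vne s → ℤ} (hc : 0 ≤ c) (u : Vne s) :
    (c ᵥ* Δ') u ≤ c u * outdeg tail u.1 := by
  rw [vecMul_reducedLaplacian_apply, sub_le_self_iff]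
  exact sum_nonneg fun v _ => mul_nonneg (hc v) (Nat.cast_nonneg _)

theorem outdeg_eq_numEdges_add_sum (v : V) :
    outdeg tail v = numEdges tail head v s + ∑ w : Vne s, numEdges tail head v w := by
  rw [← Fintype.sum_eq_add_sum_subtype_ne (fun w => numEdges tail head v w), outdeg,
    card_eq_sum_card_fiberwise (f := head) (t := univ) fun _ _ => mem_univ _]
  simp only [numEdges, filter_filter]

theorem sum_vecMul_reducedLaplacian (c : Vne s → ℤ) :
    ∑ u, (c ᵥ* Δ') u = ∑ v, c v * numEdges tail head v.1 s := by
  simp only [vecMul_reducedLaplacian_apply, sum_sub_distrib]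
  rw [sum_comm, ← sum_sub_distrib]
  refine sum_congr rfl fun v _ => ?_
  rw [← mul_sum, ← mul_sub, outdeg_eq_numEdges_add_sum (head := head)]
  push_cast
  ring

theorem mem_rowSpan_iff {x : Vne s → ℤ} :
    x ∈ rowSpan tail head s ↔ ∃ c, c ᵥ* Δ' = x := by
  simp [rowSpan, Submodule.mem_span_range_iff_exists_fun, vecMul_eq_sum]

theorem cast_fireList {σ : Vne s → ℕ} {l : List (Vne s)} (hl : Legal tail head σ l) :
    Nat.cast ∘ fireList tail head σ l = Nat.cast ∘ σ - firingVector l ᵥ* Δ' := by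
  induction l generalizing σ with
  | nil => simp [fireList]
  | cons v l ih =>
    rw [fireList, ih hl.2, cast_fire hl.1, firingVector_cons, add_vecMul, single_one_vecMul]
    funext w
    simp [sub_sub, add_comm]

/-- The least action principle. -/
theorem firingVector_le_of_legal {σ : Vne s → ℕ} {l : List (Vne s)}
    (hl : Legal tail head σ l) {c : Vne s → ℤ} (hc : 0 ≤ c)
    (hstable : ∀ u, (σ u : ℤ) - (c ᵥ* Δ') u < outdeg tail u.1) : firingVector l ≤ c := by
  induction l generalizing σ c with
  | nil => simpa using hc
  | cons v l ih =>
    have hcv : 1 ≤ c v := by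
      by_contra! h
      have hle := vecMul_reducedLaplacian_le (tail := tail) (head := head) hc v
      have hv : (outdeg tail v.1 : ℤ) ≤ σ v := by exact_mod_cast hl.1
      nlinarith [hstable v, (Nat.cast_nonneg (outdeg tail v.1) : (0 : ℤ) ≤ _)]
    have hc' : 0 ≤ c - Pi.single v 1 := fun u => by
      by_cases h : u = v
      · subst h; simpa using hcv
      · simpa [h] using hc u
    have := ih hl.2 hc' fun u => by
      have h := congrFun (cast_fire (head := head) hl.1) u
      simp only [Function.comp_apply] at h
      simpa [h, sub_vecMul, single_one_vecMul] using hstable u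
    rw [firingVector_cons]
    exact le_sub_iff_add_le.mp this

theorem neg_vecMul_reducedLaplacian_le {n : Vne s → ℤ} (hn : 0 ≤ n) {b : ℕ}
    (hb : ∀ u, (n ᵥ* Δ') u ≤ b) (w : Vne s) :
    -(n ᵥ* Δ') w ≤ Fintype.card (Vne s) * b := by
  have hsum : 0 ≤ ∑ u, (n ᵥ* Δ') u := by
    rw [sum_vecMul_reducedLaplacian]
    exact sum_nonneg fun v _ => mul_nonneg (hn v) (Nat.cast_nonneg _)
  have hw : (b : ℤ) - (n ᵥ* Δ') w ≤ ∑ u, ((b : ℤ) - (n ᵥ* Δ') u) :=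
    single_le_sum (f := fun u => (b : ℤ) - (n ᵥ* Δ') u) (fun u _ => sub_nonneg.2 (hb u))
      (mem_univ w)
  simp only [sum_sub_distrib, sum_const, card_univ, nsmul_eq_mul] at hw
  linarith [(Nat.cast_nonneg b : (0 : ℤ) ≤ b)]

theorem le_sum_mul_numEdges {n : Vne s → ℤ} (hn : 0 ≤ n) {e : E} (ht : tail e ≠ s) :
    n ⟨tail e, ht⟩ ≤ ∑ v, n v * numEdges tail head v.1 (head e) :=
  calc n ⟨tail e, ht⟩
      ≤ n ⟨tail e, ht⟩ * numEdges tail head (tail e) (head e) :=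
        le_mul_of_one_le_right (hn _) (by exact_mod_cast numEdges_pos)
    _ ≤ ∑ v, n v * numEdges tail head v.1 (head e) :=
        single_le_sum (f := fun v : Vne s => n v * numEdges tail head v.1 (head e))
          (fun v _ => mul_nonneg (hn v) (Nat.cast_nonneg _)) (mem_univ _)

theorem exists_bound_of_vecMul_reducedLaplacian_le (hsink : SinkReachable tail head s)
    (b : ℕ) : ∃ N : ℕ, ∀ n : Vne s → ℤ, 0 ≤ n → (∀ u, (n ᵥ* Δ') u ≤ b) → ∀ u, n u ≤ N := by
  have key (v : V) : ∃ N : ℕ, ∀ n : Vne s → ℤ, 0 ≤ n → (∀ u, (n ᵥ* Δ') u ≤ b) →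
      ∀ hv : v ≠ s, n ⟨v, hv⟩ ≤ N := by
    induction hsink v using Relation.ReflTransGen.head_induction_on with
    | refl => exact ⟨0, fun _ _ _ hs => absurd rfl hs⟩
    | head hstep _ ih =>
      obtain ⟨e, rfl, rfl⟩ := hstep
      obtain ⟨N, hN⟩ := ih
      by_cases hc : head e = s
      · refine ⟨Fintype.card (Vne s) * b, fun n hn hb ht => ?_⟩
        calc n ⟨tail e, ht⟩ ≤ ∑ v, n v * numEdges tail head v.1 s := hc ▸ le_sum_mul_numEdges hn ht
          _ = ∑ u, (n ᵥ* Δ') u := (sum_vecMul_reducedLaplacian n).symm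
          _ ≤ ∑ _u : Vne s, (b : ℤ) := sum_le_sum fun u _ => hb u
          _ = _ := by simp
      · refine ⟨N * Fintype.card E + Fintype.card (Vne s) * b, fun n hn hb ht => ?_⟩
        let w : Vne s := ⟨head e, hc⟩
        calc n ⟨tail e, ht⟩ ≤ ∑ v, n v * numEdges tail head v.1 w.1 := le_sum_mul_numEdges hn ht
          _ = n w * outdeg tail w.1 + -(n ᵥ* Δ') w := by
              rw [vecMul_reducedLaplacian_apply]; ring
          _ ≤ N * Fintype.card E + Fintype.card (Vne s) * b :=
              add_le_add (mul_le_mul (hN n hn hb hc) (by exact_mod_cast outdeg_le_card w.1)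
                (Nat.cast_nonneg _) (Nat.cast_nonneg _)) (neg_vecMul_reducedLaplacian_le hn hb w)
          _ = ((N * Fintype.card E + Fintype.card (Vne s) * b : ℕ) : ℤ) := by push_cast; ring
  choose N hN using key
  refine ⟨∑ v, N v, fun n hn hb u => (hN u.1 n hn hb u.2).trans ?_⟩
  exact_mod_cast single_le_sum (fun v _ => Nat.zero_le (N v)) (mem_univ u.1)

theorem exists_length_bound_of_legal (hsink : SinkReachable tail head s) (σ : Vne s → ℕ) :
    ∃ N : ℕ, ∀ l, Legal tail head σ l → l.length ≤ N := by
  obtain ⟨N, hN⟩ := exists_bound_of_vecMul_reducedLaplacian_le hsink (∑ u, σ u)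
  refine ⟨Fintype.card (Vne s) * N, fun l hl => ?_⟩
  have hcount (u : Vne s) : firingVector l u ≤ N := by
    refine hN _ (firingVector_nonneg l) (fun w => ?_) u
    have hfin := congrFun (cast_fireList hl) w
    simp only [Function.comp_apply, Pi.sub_apply] at hfin
    have hσ : (σ w : ℤ) ≤ ((∑ u, σ u : ℕ) : ℤ) :=
      Nat.cast_le.2 (single_le_sum (fun _ _ => Nat.zero_le _) (mem_univ w))
    have : (0 : ℤ) ≤ fireList tail head σ l w := Nat.cast_nonneg _
    omega
  have : (l.length : ℤ) ≤ Fintype.card (Vne s) * N :=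
    calc (l.length : ℤ) = ∑ u, firingVector l u := length_eq_sum_firingVector l
      _ ≤ ∑ _u : Vne s, (N : ℤ) := sum_le_sum fun u _ => hcount u
      _ = Fintype.card (Vne s) * N := by simp
  exact_mod_cast this

theorem exists_legal_stable (hsink : SinkReachable tail head s) (σ : Vne s → ℕ) :
    ∃ l, Legal tail head σ l ∧ Stable tail (fireList tail head σ l) :=
  (exists_length_bound_of_legal hsink σ).elim fun _ hN => exists_legal_stable_of_length_le hN

theorem accessible_fireList (hsink : SinkReachable tail head s) {α : Vne s → ℕ}
    (hα : ∀ u, outdeg tail u.1 ≤ α u + 1) {l : List (Vne s)} (hl : Legal tail head α l) :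
    Accessible tail head (fireList tail head α l) := by
  intro ζ
  obtain ⟨l₀, hl₀, hst⟩ := exists_legal_stable hsink ζ
  have hle : fireList tail head ζ l₀ ≤ α := fun u => by
    have := hst u; have := hα u; show fireList tail head ζ l₀ u ≤ α u; omega
  let γ := α - fireList tail head ζ l₀
  have hfire : fireList tail head (ζ + γ) l₀ = α := by
    rw [fireList_add hl₀, add_tsub_cancel_of_le hle]
  refine ⟨γ, l₀ ++ l, ?_⟩
  show Legal tail head (ζ + γ) (l₀ ++ l) ∧ fireList tail head (ζ + γ) (l₀ ++ l) = _
  rw [legal_append, fireList_append, hfire]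
  exact ⟨⟨legal_add hl₀ γ, hl⟩, rfl⟩

theorem exists_vecMul_reducedLaplacian_ge (hsink : SinkReachable tail head s)
    (y : Vne s → ℤ) : ∃ c, y ≤ c ᵥ* Δ' := by
  obtain ⟨l, hl, hst⟩ := exists_legal_stable hsink fun u => outdeg tail u.1
  have hpos (u : Vne s) : 1 ≤ (firingVector l ᵥ* Δ') u := by
    have h := congrFun (cast_fireList hl) u
    simp only [Function.comp_apply, Pi.sub_apply] at h
    have := hst u
    omega
  let K : ℤ := ∑ u, |y u|
  refine ⟨K • firingVector l, fun u => ?_⟩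
  have hyK : y u ≤ K :=
    (le_abs_self _).trans (single_le_sum (fun v _ => abs_nonneg (y v)) (mem_univ u))
  have hK : 0 ≤ K := sum_nonneg fun v _ => abs_nonneg (y v)
  rw [smul_vecMul, Pi.smul_apply, smul_eq_mul]
  nlinarith [hpos u]

theorem exists_recurrent_sub_mem_rowSpan (hsink : SinkReachable tail head s)
    (x : Vne s → ℤ) :
    ∃ σ : Vne s → ℕ, Recurrent tail head σ ∧ Nat.cast ∘ σ - x ∈ rowSpan tail head s := by
  obtain ⟨c, hc⟩ := exists_vecMul_reducedLaplacian_ge hsink fun u => outdeg tail u.1 - x u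
  let α : Vne s → ℕ := fun u => (x u + (c ᵥ* Δ') u).toNat
  have hα (u : Vne s) : (α u : ℤ) = x u + (c ᵥ* Δ') u := by
    have := hc u
    simp only at this
    show ((x u + (c ᵥ* Δ') u).toNat : ℤ) = _
    omega
  obtain ⟨l, hl, hst⟩ := exists_legal_stable hsink α
  refine ⟨_, ⟨hst, accessible_fireList hsink (fun u => ?_) hl⟩, ?_⟩
  · have := hα u; have := hc u; simp only at *; omega
  · refine mem_rowSpan_iff.2 ⟨c - firingVector l, ?_⟩
    rw [cast_fireList hl, sub_vecMul]
    funext u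
    simp [hα]
    ring

theorem nonneg_of_recurrent_of_stable {σ τ : Vne s → ℕ} (hσ : Recurrent tail head σ)
    (hτ : Stable tail τ) {a : Vne s → ℤ} (ha : a ᵥ* Δ' = Nat.cast ∘ σ - Nat.cast ∘ τ) :
    0 ≤ a := by
  let M : ℕ := ∑ u, (a u).natAbs
  obtain ⟨β, l, hl, hend⟩ := hσ.2 fun u => σ u + M * outdeg tail u.1
  set ζ : Vne s → ℕ := fun u => σ u + M * outdeg tail u.1 + β u
  have hn : firingVector l ᵥ* Δ' = Nat.cast ∘ ζ - Nat.cast ∘ σ := by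
    rw [← hend, cast_fireList hl]; abel
  have hM (u : Vne s) : M ≤ firingVector l u := by
    have h1 := vecMul_reducedLaplacian_le (tail := tail) (head := head) (firingVector_nonneg l) u
    have h2 : (M : ℤ) * outdeg tail u.1 ≤ (firingVector l ᵥ* Δ') u := by
      rw [hn]
      simp only [ζ, Pi.sub_apply, Function.comp_apply]
      push_cast
      linarith [(Nat.cast_nonneg (β u) : (0 : ℤ) ≤ β u)]
    have h3 : (0 : ℤ) < outdeg tail u.1 := by exact_mod_cast (Nat.zero_le _).trans_lt (hτ u)
    exact le_of_mul_le_mul_right (h2.trans h1) h3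
  have hna : 0 ≤ firingVector l + a := fun u => by
    have : -a u ≤ M := by
      have := single_le_sum (f := fun u => (a u).natAbs) (fun _ _ => Nat.zero_le _) (mem_univ u)
      omega
    simpa using (by linarith [hM u] : (0 : ℤ) ≤ firingVector l u + a u)
  have := firingVector_le_of_legal hl hna fun u => by
    rw [add_vecMul, hn, ha]
    simpa using hτ u
  exact fun u => by simpa using this u

theorem eq_of_recurrent_of_sub_mem_rowSpan {σ τ : Vne s → ℕ} (hσ : Recurrent tail head σ)
    (hτ : Recurrent tail head τ) (h : Nat.cast ∘ σ - Nat.cast ∘ τ ∈ rowSpan tail head s) :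
    σ = τ := by
  obtain ⟨a, ha⟩ := mem_rowSpan_iff.1 h
  have hpos : 0 ≤ a := nonneg_of_recurrent_of_stable hσ hτ.1 ha
  have hneg : 0 ≤ -a := nonneg_of_recurrent_of_stable hτ hσ.1 (by rw [neg_vecMul, ha, neg_sub])
  have ha0 : a = 0 := le_antisymm (neg_nonneg.1 hneg) hpos
  rw [ha0, zero_vecMul, eq_comm, sub_eq_zero] at ha
  funext u
  simpa using congrFun ha u

end ChipFiring

theorem exists_unique_recurrent_in_class_general
    {V E : Type} [Fintype V] [DecidableEq V] [Fintype E]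
    (tail head : E → V)
    (s : V)
    (hglobal : ∀ v : V,
      Relation.ReflTransGen (fun a b => ∃ e, tail e = a ∧ head e = b) v s)
    (x : Vne s → ℤ) :
    ∃! σ : Vne s → ℕ, Recurrent tail head σ ∧
      ((fun v => (σ v : ℤ)) - x) ∈ rowSpan tail head s := by
  obtain ⟨σ, hσ, hσx⟩ := ChipFiring.exists_recurrent_sub_mem_rowSpan hglobal x
  refine ⟨σ, ⟨hσ, hσx⟩, fun τ ⟨hτ, hτx⟩ =>
    ChipFiring.eq_of_recurrent_of_sub_mem_rowSpan hτ hσ ?_⟩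
  have := sub_mem hτx hσx
  rwa [sub_sub_sub_cancel_right] at this

/-- **Unique recurrent representatives.**  For a digraph with a global sink, every
equivalence class of `ℤ^{n-1}` modulo the integer row span of the reduced Laplacian
contains exactly one recurrent chip configuration. -/
theorem exists_unique_recurrent_in_class
    {V E : Type} [Fintype V] [DecidableEq V] [Fintype E]
    (tail head : E → V)
    (s : V) (hs : outdeg tail s = 0)
    (hglobal : ∀ v : V,
      Relation.ReflTransGen (fun a b => ∃ e, tail e = a ∧ head e = b) v s)
    (x : Vne s → ℤ) :
    ∃! σ : Vne s → ℕ, Recurrent tail head σ ∧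
      ((fun v => (σ v : ℤ)) - x) ∈ rowSpan tail head s :=
  exists_unique_recurrent_in_class_general tail head s hglobal x
end

section
/- Let G be a digraph with a globally reachable vertex w (from every other vertex there is a directed path to w). For any starting vertex and any rotor configuration, iterating the rotor-router operation a suitable finite number of times yields a state in which the chip is at w. -/
/-- The rotor-router operation on single-chip-and-rotor states `(u, ρ)`: if the chip
is at a non-sink vertex `u`, the rotor at `u` advances to the next edge in the cyclic
ordering of outgoing edges at `u` and the chip moves along that edge; states with the
chip at a sink are left unchanged (the chip stops there). -/
def rotorStep {V E : Type} [Fintype E] [DecidableEq V] (tail head : E → V)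
    (next : E → E) (p : V × (V → E)) : V × (V → E) :=
  if outdeg tail p.1 = 0 then p
  else (head (next (p.2 p.1)), Function.update p.2 p.1 (next (p.2 p.1)))

namespace RotorRouter

theorem infinite_setOf_iterate_eq {V E : Type} {tail : E → V} {next : E → E}
    (hnext : ∀ e, tail (next e) = tail e)
    (hcyc : ∀ e e' : E, tail e = tail e' → ∃ k, next^[k] e = e') {e₀ e : E}
    (h : tail e₀ = tail e) : {m | next^[m] e₀ = e}.Infinite := by
  obtain ⟨k, hk⟩ := hcyc e₀ e h
  obtain ⟨p, hp⟩ := hcyc (next e) e (hnext e)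
  have hper : Function.IsPeriodicPt next (p + 1) e := by
    rw [Function.IsPeriodicPt, Function.IsFixedPt, Function.iterate_succ_apply]
    exact hp
  refine Set.infinite_of_injective_forall_mem (f := fun j => (p + 1) * j + k) ?_ fun j => ?_
  · intro a b hab
    simpa using hab
  · show next^[(p + 1) * j + k] e₀ = e
    rw [Function.iterate_add_apply, hk]
    exact (hper.mul_const j).eq

variable {V E : Type} [DecidableEq V] [Fintype E] {tail : E → V} {head : E → V} {next : E → E}

theorem outdeg_ne_zero_of_tail_eq {e : E} {v : V} (h : tail e = v) : outdeg tail v ≠ 0 :=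
  Finset.card_ne_zero_of_mem (Finset.mem_filter.mpr ⟨Finset.mem_univ e, h⟩)

theorem outdeg_ne_zero_of_reflTransGen {u w : V}
    (h : Relation.ReflTransGen (fun a b => ∃ e, tail e = a ∧ head e = b) u w) (hne : u ≠ w) :
    outdeg tail u ≠ 0 := by
  obtain rfl | ⟨_, ⟨e, he, -⟩, -⟩ := h.cases_head
  · exact absurd rfl hne
  · exact outdeg_ne_zero_of_tail_eq he

variable (tail head next)

theorem rotorStep_of_outdeg_ne_zero {p : V × (V → E)} (h : outdeg tail p.1 ≠ 0) :
    rotorStep tail head next p =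
      (head (next (p.2 p.1)), Function.update p.2 p.1 (next (p.2 p.1))) :=
  if_neg h

theorem rotorStep_iterate_snd_apply (p : V × (V → E)) (n : ℕ)
    (hsink : ∀ m < n, outdeg tail ((rotorStep tail head next)^[m] p).1 ≠ 0) (v : V) :
    ((rotorStep tail head next)^[n] p).2 v =
      next^[Nat.count (fun m => ((rotorStep tail head next)^[m] p).1 = v) n] (p.2 v) := by
  induction n with
  | zero => rfl
  | succ n ih =>
    have hsink_n : ∀ m < n, outdeg tail ((rotorStep tail head next)^[m] p).1 ≠ 0 :=
      fun m hm => hsink m (hm.trans n.lt_succ_self)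
    rw [Function.iterate_succ_apply',
      rotorStep_of_outdeg_ne_zero tail head next (hsink n n.lt_succ_self), Nat.count_succ]
    by_cases hv : ((rotorStep tail head next)^[n] p).1 = v
    · rw [if_pos hv, Function.iterate_succ_apply', ← ih hsink_n, ← hv]
      exact Function.update_self _ _ _
    · rw [if_neg hv, add_zero, ← ih hsink_n]
      exact Function.update_of_ne (Ne.symm hv) _ _

variable {tail head next}

theorem infinite_visits_head_of_tail (p : V × (V → E))
    (hsink : ∀ n, outdeg tail ((rotorStep tail head next)^[n] p).1 ≠ 0) {e : E}
    (hrot : {m | next^[m] (next (p.2 (tail e))) = e}.Infinite)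
    (hv : {n | ((rotorStep tail head next)^[n] p).1 = tail e}.Infinite) :
    {n | ((rotorStep tail head next)^[n] p).1 = head e}.Infinite := by
  -- The `m`-th visit to `tail e` happens at time `Nat.nth P m`, and the chip then leaves along
  -- `next^[m + 1]` of the initial rotor at `tail e`.
  set P := fun n => ((rotorStep tail head next)^[n] p).1 = tail e
  have hinj : Set.InjOn (fun m => Nat.nth P m + 1) {m | next^[m] (next (p.2 (tail e))) = e} :=
    (Nat.succ_injective.comp (Nat.nth_strictMono hv).injective).injOn
  refine (hrot.image hinj).mono ?_
  rintro _ ⟨m, hm, rfl⟩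
  set n := Nat.nth P m
  have hchip : ((rotorStep tail head next)^[n] p).1 = tail e := Nat.nth_mem_of_infinite hv m
  have hrotor : ((rotorStep tail head next)^[n] p).2 (tail e) = next^[m] (p.2 (tail e)) := by
    rw [rotorStep_iterate_snd_apply tail head next p n fun k _ => hsink k,
      Nat.count_nth_of_infinite hv m]
  show ((rotorStep tail head next)^[n + 1] p).1 = head e
  rw [Function.iterate_succ_apply', rotorStep_of_outdeg_ne_zero tail head next (hsink n), hchip,
    hrotor, ← Function.iterate_succ_apply' next, Function.iterate_succ_apply, hm]

theorem infinite_visits_of_reflTransGen (hnext : ∀ e, tail (next e) = tail e)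
    (hcyc : ∀ e e' : E, tail e = tail e' → ∃ k, next^[k] e = e') (p : V × (V → E))
    (hρ : ∀ v, outdeg tail v ≠ 0 → tail (p.2 v) = v)
    (hsink : ∀ n, outdeg tail ((rotorStep tail head next)^[n] p).1 ≠ 0) {u w : V}
    (hpath : Relation.ReflTransGen (fun a b => ∃ e, tail e = a ∧ head e = b) u w)
    (hu : {n | ((rotorStep tail head next)^[n] p).1 = u}.Infinite) :
    {n | ((rotorStep tail head next)^[n] p).1 = w}.Infinite := by
  induction hpath using Relation.ReflTransGen.head_induction_on with
  | refl => exact hu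
  | head hedge _ ih =>
    obtain ⟨e, rfl, rfl⟩ := hedge
    have hrot := infinite_setOf_iterate_eq hnext hcyc
      (by rw [hnext, hρ _ (outdeg_ne_zero_of_tail_eq rfl)] : tail (next (p.2 (tail e))) = tail e)
    exact ih (infinite_visits_head_of_tail p hsink hrot hu)

end RotorRouter

open RotorRouter in
/-- **The chip reaches any globally reachable vertex.**  If `w` is globally reachable
(from every vertex there is a directed path to `w`), then for any starting vertex `v₀`
and any rotor configuration `ρ₀`, iterating the rotor-router operation a suitable
finite number of times yields a state in which the chip is at `w`. -/
theorem rotor_walk_reaches_globally_reachable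
    {V E : Type} [Fintype V] [DecidableEq V] [Fintype E]
    (tail head : E → V) (next : E → E)
    (hnext : ∀ e, tail (next e) = tail e)
    (hcyc : ∀ e e' : E, tail e = tail e' → ∃ k, next^[k] e = e')
    (w : V)
    (hglobal : ∀ v : V,
      Relation.ReflTransGen (fun a b => ∃ e, tail e = a ∧ head e = b) v w)
    (v₀ : V) (ρ₀ : V → E)
    (hρ₀ : ∀ v : V, outdeg tail v ≠ 0 → tail (ρ₀ v) = v) :
    ∃ n : ℕ, ((rotorStep tail head next)^[n] (v₀, ρ₀)).1 = w := by
  by_contra! hnever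
  have hsink (n : ℕ) : outdeg tail ((rotorStep tail head next)^[n] (v₀, ρ₀)).1 ≠ 0 :=
    outdeg_ne_zero_of_reflTransGen (hglobal _) (hnever n)
  obtain ⟨v, hv⟩ :=
    Finite.exists_infinite_fiber fun n => ((rotorStep tail head next)^[n] (v₀, ρ₀)).1
  obtain ⟨n, hn⟩ := (infinite_visits_of_reflTransGen hnext hcyc (v₀, ρ₀) hρ₀ hsink (hglobal v)
    (Set.infinite_coe_iff.mp hv)).nonempty
  exact hnever n hn
end

section
/- Let G be a digraph with a global sink and let v be a non-sink vertex of G. The chip addition operator E_v is a permutation of the set of acyclic rotor configurations on G. -/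
/-- Rotor configurations on the non-sink vertices. -/
abbrev RotorConfig {V E : Type} (tail : E → V) (s : V) : Type :=
  {ρ : Vne s → E // ∀ v, tail (ρ v) = v.1}

/-- One step of rotor-router walk for a single chip: if the chip is at a non-sink
vertex `u`, the rotor at `u` advances to the next edge in the cyclic ordering and the
chip moves along it; once the chip is at the sink it stays there. -/
def chipStep {V E : Type} [DecidableEq V] (tail head : E → V) (next : E → E)
    (hnext : ∀ e, tail (next e) = tail e) (s : V)
    (p : V × RotorConfig tail s) : V × RotorConfig tail s :=
  if h : p.1 = s then p
  else
    (head (next (p.2.1 ⟨p.1, h⟩)),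
     ⟨Function.update p.2.1 ⟨p.1, h⟩ (next (p.2.1 ⟨p.1, h⟩)), by
        intro u
        rcases eq_or_ne u ⟨p.1, h⟩ with h' | h'
        · rw [h', Function.update_self, hnext]
          exact p.2.2 ⟨p.1, h⟩
        · rw [Function.update_of_ne h']
          exact p.2.2 u⟩)

/-- The chip addition operator `E_v` as a relation: `Routes v ρ ρ'` holds when a chip
added at `v` and routed by rotor-router walk reaches the sink, leaving the rotor
configuration `ρ'`. -/
def Routes {V E : Type} [DecidableEq V] (tail head : E → V) (next : E → E)
    (hnext : ∀ e, tail (next e) = tail e) (s : V)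
    (v : Vne s) (ρ ρ' : RotorConfig tail s) : Prop :=
  ∃ n : ℕ, (chipStep tail head next hnext s)^[n] (v.1, ρ) = (s, ρ')

/-- The vertex-successor map of a rotor configuration (fixing the sink). -/
def rotorSucc {V E : Type} [DecidableEq V] (tail head : E → V) (s : V)
    (ρ : RotorConfig tail s) : V → V :=
  fun u => if h : u = s then u else head (ρ.1 ⟨u, h⟩)

/-- A rotor configuration is acyclic when its edges `{ρ(v)}` contain no directed
cycle; equivalently, they form an oriented spanning tree rooted at the sink. -/
def RAcyclic {V E : Type} [DecidableEq V] (tail head : E → V) (s : V)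
    (ρ : RotorConfig tail s) : Prop :=
  ∀ (v : Vne s) (k : ℕ), 0 < k → (rotorSucc tail head s ρ)^[k] v.1 ≠ v.1

namespace Function

variable {α : Type*} {f g : α → α} {S : Set α} {x y z : α}

theorem iterate_eq_iterate_of_eqOn_compl (hfg : ∀ z ∉ S, f z = g z) {n : ℕ}
    (hn : ∀ k < n, f^[k] x ∉ S) : f^[n] x = g^[n] x := by
  induction n with
  | zero => rfl
  | succ n ih =>
    rw [iterate_succ_apply', iterate_succ_apply', ← ih fun k hk => hn k (by omega),
      hfg _ (hn n n.lt_succ_self)]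

theorem exists_iterate_mem_periodicPts [Finite α] (f : α → α) (x : α) :
    ∃ m, f^[m] x ∈ periodicPts f := by
  obtain ⟨a, b, hab, heq⟩ : ∃ a b, a < b ∧ f^[a] x = f^[b] x := by
    obtain ⟨a, b, hne, heq⟩ := Finite.exists_ne_map_eq_of_infinite (f^[·] x)
    rcases hne.lt_or_gt with h | h
    exacts [⟨a, b, h, heq⟩, ⟨b, a, h, heq.symm⟩]
  refine ⟨a, mk_mem_periodicPts (Nat.sub_pos_of_lt hab) ?_⟩
  rw [IsPeriodicPt, IsFixedPt, ← iterate_add_apply, Nat.sub_add_cancel hab.le, heq]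

theorem _root_.Set.InjOn.subset_periodicPts {Ω : Set α} [Finite Ω] (hinj : Set.InjOn f Ω)
    (hmaps : Set.MapsTo f Ω Ω) : Ω ⊆ periodicPts f := fun x hx =>
  Semiconj.mapsTo_periodicPts (g := Subtype.val) (fb := f) (fun _ => rfl)
    ((hmaps.restrict_inj.2 hinj).mem_periodicPts ⟨x, hx⟩)

def ReachableFromAll (f : α → α) (x : α) : Prop :=
  ∀ u, ∃ m, f^[m] u = x

theorem ReachableFromAll.of_eqOn_compl (h : ReachableFromAll f x)
    (hfg : ∀ z, z ≠ x → f z = g z) : ReachableFromAll g x := by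
  classical
  intro u
  refine ⟨Nat.find (h u), ?_⟩
  rw [← iterate_eq_iterate_of_eqOn_compl (S := {x}) hfg fun k hk => Nat.find_min (h u) hk]
  exact Nat.find_spec (h u)

theorem ReachableFromAll.apply (h : ReachableFromAll f x) : ReachableFromAll f (f x) :=
  fun u =>
    let ⟨m, hm⟩ := h u
    ⟨m + 1, by rw [iterate_succ_apply', hm]⟩

theorem ReachableFromAll.mem_periodicPts (h : ReachableFromAll f x) : x ∈ periodicPts f := by
  obtain ⟨m, hm⟩ := h (f x)
  exact mk_mem_periodicPts m.succ_pos (by rw [IsPeriodicPt, IsFixedPt, iterate_succ_apply, hm])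

theorem reachableFromAll_iff_periodicPts_subset [Finite α] (hx : IsFixedPt f x) :
    ReachableFromAll f x ↔ periodicPts f ⊆ {x} := by
  have hxper : x ∈ periodicPts f := mk_mem_periodicPts one_pos (hx.isPeriodicPt 1)
  constructor
  · intro h y hy
    obtain ⟨m, hm⟩ := h y
    exact (bijOn_periodicPts f).injOn.iterate (bijOn_periodicPts f).mapsTo m hy hxper
      (hm.trans (hx.iterate m).symm)
  · intro h u
    obtain ⟨m, hm⟩ := exists_iterate_mem_periodicPts f u
    exact ⟨m, h hm⟩

def IsFirstHit (f : α → α) (S : Set α) (x y : α) : Prop :=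
  ∃ n, f^[n] x = y ∧ y ∈ S ∧ ∀ k < n, f^[k] x ∉ S

theorem IsFirstHit.mem (h : IsFirstHit f S x y) : y ∈ S :=
  let ⟨_, _, hy, _⟩ := h
  hy

theorem IsFirstHit.mem_of_mapsTo {Ω : Set α} (h : IsFirstHit f S x y) (hmaps : Set.MapsTo f Ω Ω)
    (hx : x ∈ Ω) : y ∈ Ω :=
  let ⟨n, hn, _⟩ := h
  hn ▸ hmaps.iterate n hx

theorem IsFirstHit.of_eqOn_compl (h : IsFirstHit f S x y) (hfg : ∀ z ∉ S, f z = g z) :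
    IsFirstHit g S x y := by
  obtain ⟨n, hn, hy, hmin⟩ := h
  refine ⟨n, iterate_eq_iterate_of_eqOn_compl hfg hmin ▸ hn, hy, fun k hk => ?_⟩
  rw [← iterate_eq_iterate_of_eqOn_compl hfg fun j hj => hmin j (hj.trans hk)]
  exact hmin k hk

theorem isFirstHit_congr (hfg : ∀ z ∉ S, f z = g z) : IsFirstHit f S x y ↔ IsFirstHit g S x y :=
  ⟨fun h => h.of_eqOn_compl hfg, fun h => h.of_eqOn_compl fun z hz => (hfg z hz).symm⟩

theorem exists_isFirstHit (h : ∃ n, f^[n] x ∈ S) : ∃ y, IsFirstHit f S x y := by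
  classical
  exact ⟨_, Nat.find h, rfl, Nat.find_spec h, fun k hk => Nat.find_min h hk⟩

theorem isFirstHit_of_iterate_eq (hS : ∀ y ∈ S, IsFixedPt f y) {n : ℕ} (hn : f^[n] x = y)
    (hy : y ∈ S) : IsFirstHit f S x y := by
  classical
  have h : ∃ m, f^[m] x ∈ S := ⟨n, hn ▸ hy⟩
  have hle : Nat.find h ≤ n := Nat.find_min' h (hn ▸ hy)
  refine ⟨Nat.find h, ?_, hy, fun k hk => Nat.find_min h hk⟩
  rw [← hn, ← Nat.sub_add_cancel hle, iterate_add_apply, (hS _ (Nat.find_spec h)).iterate]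

theorem exists_isFirstHit_apply_of_mem_periodicPts (hx : x ∈ periodicPts f) (hxS : x ∈ S) :
    ∃ y, IsFirstHit f S (f x) y := by
  obtain ⟨n, hn, hper⟩ := hx
  refine exists_isFirstHit ⟨n - 1, ?_⟩
  rwa [← iterate_succ_apply, Nat.succ_eq_add_one, Nat.sub_add_cancel hn, hper.eq]

theorem exists_isFirstHit_apply_eq_of_mem_periodicPts (hy : y ∈ periodicPts f) (hyS : y ∈ S) :
    ∃ t, f^[t] y ∈ S ∧ IsFirstHit f S (f (f^[t] y)) y := by
  classical
  obtain ⟨n, hn, hper⟩ := hy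
  -- the last visit to `S` before the orbit of `y` returns to `y`
  set t := Nat.findGreatest (fun t => f^[t] y ∈ S) (n - 1)
  have ht : t ≤ n - 1 := Nat.findGreatest_le _
  refine ⟨t, Nat.findGreatest_spec (P := fun t => f^[t] y ∈ S) (Nat.zero_le _) hyS,
    n - 1 - t, ?_, hyS, fun k hk => ?_⟩
  · rw [← iterate_succ_apply, ← iterate_add_apply, Nat.succ_eq_add_one,
      show n - 1 - t + 1 + t = n by omega, hper.eq]
  · rw [← iterate_succ_apply, ← iterate_add_apply]
    exact Nat.findGreatest_is_greatest (P := fun t => f^[t] y ∈ S) (n := n - 1)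
      (show t < _ by omega) (by omega)

theorem eq_of_isFirstHit_apply {Ω : Set α} (hinj : Set.InjOn f Ω) (hmaps : Set.MapsTo f Ω Ω)
    (hx : x ∈ Ω) (hy : y ∈ Ω) (hxS : x ∈ S) (hyS : y ∈ S)
    (hxz : IsFirstHit f S (f x) z) (hyz : IsFirstHit f S (f y) z) : x = y := by
  obtain ⟨m, hm, -, hmin⟩ := hxz
  obtain ⟨n, hn, -, hnmin⟩ := hyz
  wlog hmn : m ≤ n generalizing x y m n
  · exact (this hy hx hyS hxS n hn hnmin m hm hmin (by omega)).symm
  have hxy : x = f^[n - m] y := by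
    refine hinj.iterate hmaps (m + 1) hx (hmaps.iterate _ hy) ?_
    rw [iterate_succ_apply, hm, ← iterate_add_apply, show m + 1 + (n - m) = n + 1 by omega,
      iterate_succ_apply, hn]
  obtain hnm | hnm := Nat.eq_zero_or_pos (n - m)
  · rwa [hnm] at hxy
  · have h := hnmin (n - m - 1) (by omega)
    rw [← iterate_succ_apply, Nat.succ_eq_add_one, Nat.sub_add_cancel hnm, ← hxy] at h
    exact absurd hxS h

end Function

open Function

theorem injective_next {V E : Type} [Finite E] {tail : E → V} {next : E → E}
    (hnext : ∀ e, tail (next e) = tail e)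
    (hcyc : ∀ e e' : E, tail e = tail e' → ∃ k, next^[k] e = e') : Injective next :=
  Finite.injective_iff_surjective.2 fun e =>
    let ⟨k, hk⟩ := hcyc (next e) e (hnext e)
    ⟨next^[k] e, by rw [← iterate_succ_apply' next, iterate_succ_apply, hk]⟩

section RotorWalk

variable {V E : Type} [DecidableEq V] {tail head : E → V} {next : E → E}
  {hnext : ∀ e, tail (next e) = tail e} {s : V} {v : Vne s}

theorem rAcyclic_iff_periodicPts_subset {ρ : RotorConfig tail s} :
    RAcyclic tail head s ρ ↔ periodicPts (rotorSucc tail head s ρ) ⊆ {s} := by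
  constructor
  · rintro h u ⟨k, hk, hper⟩
    by_contra hu
    exact h ⟨u, hu⟩ k hk hper
  · intro h u k hk hper
    exact u.2 (h (mk_mem_periodicPts hk hper))

theorem isFixedPt_rotorSucc (ρ : RotorConfig tail s) : IsFixedPt (rotorSucc tail head s ρ) s :=
  dif_pos rfl

theorem chipStep_of_fst_eq {p : V × RotorConfig tail s} (hp : p.1 = s) :
    chipStep tail head next hnext s p = p :=
  dif_pos hp

variable (head) in
def augmentedSucc (v : Vne s) (ρ : RotorConfig tail s) : V → V :=
  fun u => if h : u = s then v.1 else head (ρ.1 ⟨u, h⟩)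

variable (head next hnext) in
def augmentedStep (v : Vne s) (p : V × RotorConfig tail s) : V × RotorConfig tail s :=
  if p.1 = s then (v.1, p.2) else chipStep tail head next hnext s p

-- In a finite functional graph, "every vertex reaches `p.1`" says that there is exactly one
-- cycle and that the chip lies on it: the paper's unicycles.
variable (head) in
def IsUnicycle (v : Vne s) (p : V × RotorConfig tail s) : Prop :=
  ReachableFromAll (augmentedSucc head v p.2) p.1

theorem augmentedSucc_eq_rotorSucc (ρ : RotorConfig tail s) {u : V} (hu : u ≠ s) :
    augmentedSucc head v ρ u = rotorSucc tail head s ρ u := by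
  simp only [augmentedSucc, rotorSucc, dif_neg hu]

theorem augmentedSucc_eq_of_ne {ρ σ : RotorConfig tail s} {x : V}
    (h : ∀ w : Vne s, w.1 ≠ x → ρ.1 w = σ.1 w) {u : V} (hu : u ≠ x) :
    augmentedSucc head v ρ u = augmentedSucc head v σ u := by
  unfold augmentedSucc
  split_ifs with hus
  · rfl
  · rw [h ⟨u, hus⟩ hu]

theorem augmentedStep_of_fst_ne {p : V × RotorConfig tail s} (hp : p.1 ≠ s) :
    augmentedStep head next hnext v p = chipStep tail head next hnext s p :=
  if_neg hp

theorem augmentedStep_sink (ρ : RotorConfig tail s) :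
    augmentedStep head next hnext v (s, ρ) = (v.1, ρ) :=
  if_pos rfl

theorem augmentedStep_snd_apply (p : V × RotorConfig tail s) (w : Vne s) :
    (augmentedStep head next hnext v p).2.1 w =
      if w.1 = p.1 then next (p.2.1 w) else p.2.1 w := by
  by_cases hp : p.1 = s
  · rw [augmentedStep, if_pos hp, if_neg fun h => w.2 (h.trans hp)]
  · rw [augmentedStep_of_fst_ne hp, chipStep, dif_neg hp]
    by_cases hw : w = ⟨p.1, hp⟩
    · subst hw; simp
    · rw [if_neg fun h => hw (Subtype.ext h)]
      exact update_of_ne hw _ _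

theorem augmentedStep_fst (p : V × RotorConfig tail s) :
    (augmentedStep head next hnext v p).1 =
      augmentedSucc head v (augmentedStep head next hnext v p).2 p.1 := by
  by_cases hp : p.1 = s
  · simp only [augmentedStep, augmentedSucc, if_pos hp, dif_pos hp]
  · rw [augmentedSucc, dif_neg hp, augmentedStep_snd_apply, if_pos rfl,
      augmentedStep_of_fst_ne hp, chipStep, dif_neg hp]

theorem IsUnicycle.reachableFromAll_augmentedStep {p : V × RotorConfig tail s}
    (hp : IsUnicycle head v p) :
    ReachableFromAll (augmentedSucc head v (augmentedStep head next hnext v p).2) p.1 :=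
  hp.of_eqOn_compl fun _ hu =>
    augmentedSucc_eq_of_ne (fun w hw => by rw [augmentedStep_snd_apply, if_neg hw]) hu

theorem IsUnicycle.augmentedStep {p : V × RotorConfig tail s} (hp : IsUnicycle head v p) :
    IsUnicycle head v (augmentedStep head next hnext v p) := by
  rw [IsUnicycle, augmentedStep_fst]
  exact hp.reachableFromAll_augmentedStep.apply

theorem injOn_augmentedStep (hinj : Injective next) :
    Set.InjOn (augmentedStep head next hnext v) {p | IsUnicycle head v p} := by
  intro p hp q hq hpq
  have hfst : p.1 = q.1 := by
    have hpper := (hp.reachableFromAll_augmentedStep (hnext := hnext)).mem_periodicPts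
    have hqper := (hq.reachableFromAll_augmentedStep (hnext := hnext)).mem_periodicPts
    have hsucc := augmentedStep_fst (head := head) (hnext := hnext) (v := v) q
    rw [← hpq] at hqper hsucc
    exact (bijOn_periodicPts _).injOn hpper hqper ((augmentedStep_fst p).symm.trans hsucc)
  refine Prod.ext hfst (Subtype.ext (funext fun w => ?_))
  have h := congrArg (fun r => r.2.1 w) hpq
  simp only [augmentedStep_snd_apply, hfst] at h
  split_ifs at h
  exacts [hinj h, h]

theorem isUnicycle_sink_iff [Finite V] {ρ : RotorConfig tail s} :
    IsUnicycle head v (s, ρ) ↔ RAcyclic tail head s ρ := by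
  have hagree (u : V) (hu : u ≠ s) := augmentedSucc_eq_rotorSucc (head := head) (v := v) ρ hu
  rw [rAcyclic_iff_periodicPts_subset, ← reachableFromAll_iff_periodicPts_subset
    (isFixedPt_rotorSucc ρ), IsUnicycle]
  exact ⟨fun h => h.of_eqOn_compl hagree, fun h => h.of_eqOn_compl fun u hu => (hagree u hu).symm⟩

theorem routes_iff_isFirstHit {ρ ρ' : RotorConfig tail s} :
    Routes tail head next hnext s v ρ ρ' ↔
      IsFirstHit (augmentedStep head next hnext v) {p | p.1 = s}
        (augmentedStep head next hnext v (s, ρ)) (s, ρ') := by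
  rw [augmentedStep_sink, ← isFirstHit_congr (S := {p : V × RotorConfig tail s | p.1 = s})
    fun p hp => (augmentedStep_of_fst_ne hp).symm]
  exact ⟨fun ⟨n, hn⟩ => isFirstHit_of_iterate_eq (fun p hp => chipStep_of_fst_eq hp) hn rfl,
    fun ⟨n, hn, _⟩ => ⟨n, hn⟩⟩

end RotorWalk

theorem chip_addition_permutes_acyclic_rotor_configurations_general
    {V E : Type} [Fintype V] [DecidableEq V] [Fintype E]
    (tail head : E → V) (next : E → E)
    (hnext : ∀ e, tail (next e) = tail e)
    (hcyc : ∀ e e' : E, tail e = tail e' → ∃ k, next^[k] e = e')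
    (s : V)
    (v : Vne s) :
    (∀ ρ : RotorConfig tail s, RAcyclic tail head s ρ →
        ∃ ρ', RAcyclic tail head s ρ' ∧ Routes tail head next hnext s v ρ ρ') ∧
    (∀ ρ₁ ρ₂ ρ' : RotorConfig tail s, RAcyclic tail head s ρ₁ → RAcyclic tail head s ρ₂ →
        Routes tail head next hnext s v ρ₁ ρ' → Routes tail head next hnext s v ρ₂ ρ' →
        ρ₁ = ρ₂) ∧
    (∀ ρ' : RotorConfig tail s, RAcyclic tail head s ρ' →
        ∃ ρ, RAcyclic tail head s ρ ∧ Routes tail head next hnext s v ρ ρ') := by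
  set A := augmentedStep head next hnext v
  set Ω := {p | IsUnicycle head v p}
  set S := {p : V × RotorConfig tail s | p.1 = s}
  have hsink (ρ : RotorConfig tail s) : (s, ρ) ∈ S := rfl
  have hmaps : Set.MapsTo A Ω Ω := fun _ hp => IsUnicycle.augmentedStep hp
  have hinj : Set.InjOn A Ω := injOn_augmentedStep (injective_next hnext hcyc)
  have hper : Ω ⊆ periodicPts A := hinj.subset_periodicPts hmaps
  refine ⟨fun ρ hρ => ?_, fun ρ₁ ρ₂ ρ' h₁ h₂ hr₁ hr₂ => ?_, fun ρ' hρ' => ?_⟩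
  · have hΩ : (s, ρ) ∈ Ω := isUnicycle_sink_iff.2 hρ
    obtain ⟨⟨x, ρ'⟩, hhit⟩ := exists_isFirstHit_apply_of_mem_periodicPts (hper hΩ) (hsink ρ)
    obtain rfl : x = s := hhit.mem
    exact ⟨ρ', isUnicycle_sink_iff.1 (hhit.mem_of_mapsTo hmaps (hmaps hΩ)),
      routes_iff_isFirstHit.2 hhit⟩
  · exact congrArg Prod.snd (eq_of_isFirstHit_apply hinj hmaps (isUnicycle_sink_iff.2 h₁)
      (isUnicycle_sink_iff.2 h₂) (hsink ρ₁) (hsink ρ₂) (routes_iff_isFirstHit.1 hr₁)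
      (routes_iff_isFirstHit.1 hr₂))
  · obtain ⟨t, ht, hhit⟩ := exists_isFirstHit_apply_eq_of_mem_periodicPts
      (hper (isUnicycle_sink_iff.2 hρ')) (hsink ρ')
    have hΩ : A^[t] (s, ρ') ∈ Ω := hmaps.iterate t (isUnicycle_sink_iff.2 hρ')
    generalize A^[t] (s, ρ') = p at ht hhit hΩ
    obtain ⟨x, σ⟩ := p
    obtain rfl : x = s := ht
    exact ⟨σ, isUnicycle_sink_iff.1 hΩ, routes_iff_isFirstHit.2 hhit⟩

/-- **`E_v` permutes acyclic rotor configurations.**  On a digraph with a global sink,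
the chip addition operator `E_v` maps acyclic rotor configurations to acyclic rotor
configurations, injectively and surjectively. -/
theorem chip_addition_permutes_acyclic_rotor_configurations
    {V E : Type} [Fintype V] [DecidableEq V] [Fintype E]
    (tail head : E → V) (next : E → E)
    (hnext : ∀ e, tail (next e) = tail e)
    (hcyc : ∀ e e' : E, tail e = tail e' → ∃ k, next^[k] e = e')
    (s : V) (hs : ∀ e : E, tail e ≠ s)
    (hglobal : ∀ v : V,
      Relation.ReflTransGen (fun a b => ∃ e, tail e = a ∧ head e = b) v s)
    (v : Vne s) :
    (∀ ρ : RotorConfig tail s, RAcyclic tail head s ρ →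
        ∃ ρ', RAcyclic tail head s ρ' ∧ Routes tail head next hnext s v ρ ρ') ∧
    (∀ ρ₁ ρ₂ ρ' : RotorConfig tail s, RAcyclic tail head s ρ₁ → RAcyclic tail head s ρ₂ →
        Routes tail head next hnext s v ρ₁ ρ' → Routes tail head next hnext s v ρ₂ ρ' →
        ρ₁ = ρ₂) ∧
    (∀ ρ' : RotorConfig tail s, RAcyclic tail head s ρ' →
        ∃ ρ, RAcyclic tail head s ρ ∧ Routes tail head next hnext s v ρ ρ') :=
  chip_addition_permutes_acyclic_rotor_configurations_general tail head next hnext hcyc s v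
end
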